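/- arXiv:2503.03910 — 2 statements merged into one kernel-verified Lean document; each statement's English description precedes it below -/
import Mathlib

section
/- (Proposition 1, part 1: failure of the sample plug-in objective.) Fix p ∈ [1,∞] and constants 0 < k̲ ≤ k̄. There exist a distribution F₀, parameters α_t, Ω_t, welfare weights η_j and constant μ satisfying Assumptions 1, 2, 3 (one may take F₀ uniform on the four points {−1,1}×{−1,1}, α_t = 0, Ω_t = I₂, η_j = 1, μ = −1), and a constant K > 0 depending only on p, k̲, k̄ (not on J), such that for every J ≥ 1 and every choice of covariance matrices Σ_{1:J} with k̲ I₂ ⪯ Ψ_j ⪯ k̄ I₂ for all j: (1/N_p) · sup over local spending rules v : R^{2J} → B_p of E[ |⟨∇w* − ∇ŵ, v(Y_{1:J})⟩| ] ≥ K, where ∇w* = E[∇w | Y_{1:J}] is the oracle gradient. -/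
open MeasureTheory ProbabilityTheory Matrix Real Filter Set
open scoped ENNReal NNReal Classical

noncomputable section

namespace PolicyEB

abbrev V : Type := Fin 2 → ℝ
abbrev M2 : Type := Matrix (Fin 2) (Fin 2) ℝ

instance : MeasurableSpace M2 := (inferInstance : MeasurableSpace (Fin 2 → Fin 2 → ℝ))

attribute [local instance] Matrix.normedAddCommGroup Matrix.normedSpace

/-- Loewner partial order `A ⪯ B` on 2×2 real matrices. -/
def LoewnerLE (A B : M2) : Prop := (B - A).PosSemidef

/-- The standard bivariate Gaussian distribution on `ℝ²`. -/
def stdGauss2 : Measure V :=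
  Measure.map (fun p : ℝ × ℝ => ![p.1, p.2])
    ((gaussianReal 0 1).prod (gaussianReal 0 1))

/-- Lebesgue measure on `ℝ²`. -/
def vol2 : Measure V := Measure.pi fun _ => volume

/-- Euclidean norm on `ℝ²`. -/
def n2 (v : V) : ℝ := Real.sqrt (v 0 ^ 2 + v 1 ^ 2)

/-- Sup norm on `ℝ²`. -/
def ninf (v : V) : ℝ := max |v 0| |v 1|

/-- `ℓ² → ℓ²` operator norm of a 2×2 matrix. -/
def opN (A : M2) : ℝ := sSup {r : ℝ | ∃ x : V, n2 x ≤ 1 ∧ r = n2 (A.mulVec x)}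

/-- Frobenius norm of a 2×2 matrix. -/
def frobN (A : M2) : ℝ := Real.sqrt (∑ i, ∑ j, (A i j) ^ 2)

/-- Unnormalized Gaussian kernel `φ_Ψ(x) = exp(-½ xᵀ Ψ⁻¹ x)`. -/
def gk (Ψ : M2) (x : V) : ℝ := Real.exp (-(1 / 2) * (x ⬝ᵥ Ψ⁻¹.mulVec x))

/-- Normalizing constant `det(2πΨ)^{-1/2}` of a bivariate Gaussian. -/
def gconst (Ψ : M2) : ℝ := (Real.sqrt ((2 * π) ^ 2 * Ψ.det))⁻¹

/-- Mixture density `f_{F,Ψ}`. -/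
def mixD (F : Measure V) (Ψ : M2) (x : V) : ℝ := ∫ τ, gconst Ψ * gk Ψ (x - τ) ∂F

/-- Gradient `∇f_{F,Ψ}` of the mixture density. -/
def mixGrad (F : Measure V) (Ψ : M2) (x : V) : V :=
  ∫ τ, (gconst Ψ * gk Ψ (x - τ)) • Ψ⁻¹.mulVec (τ - x) ∂F

/-- Hessian `∇²f_{F,Ψ}` of the mixture density. -/
def mixHess (F : Measure V) (Ψ : M2) (x : V) : M2 :=
  ∫ τ, (gconst Ψ * gk Ψ (x - τ)) • (Ψ⁻¹ * vecMulVec (τ - x) (τ - x) * Ψ⁻¹ - Ψ⁻¹) ∂F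

/-- Posterior mean `E_{F,Ψ}[τ | z]`. -/
def postMean (F : Measure V) (Ψ : M2) (z : V) : V :=
  (∫ τ, gk Ψ (z - τ) ∂F)⁻¹ • ∫ τ, gk Ψ (z - τ) • τ ∂F

/-- Squared Hellinger distance between two densities on `ℝ²`. -/
def hellSq (f g : V → ℝ) : ℝ := (1 / 2) * ∫ z, (Real.sqrt (f z) - Real.sqrt (g z)) ^ 2 ∂vol2

/-- `ℓ^p` norm on `Fin J → ℝ` for `p ∈ [1,∞]`. -/
def pN {J : ℕ} (p : ℝ≥0∞) (v : Fin J → ℝ) : ℝ :=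
  if p = ⊤ then ⨆ j, |v j| else (∑ j, |v j| ^ p.toReal) ^ (1 / p.toReal)

/-- Unit `ℓ^p` ball in `ℝ^J`. -/
def Bp (J : ℕ) (p : ℝ≥0∞) : Set (Fin J → ℝ) := {v | pN p v ≤ 1}

/-- Normalization factor `N_p`. -/
def Np (J : ℕ) (p : ℝ≥0∞) : ℝ :=
  if p = ⊤ then (J : ℝ) else (J : ℝ) ^ ((p.toReal - 1) / p.toReal)

/-- `κ_J = (3/J) log (J / (2πe)^{1/3})`. -/
def kappaJ (J : ℕ) : ℝ := (3 / (J : ℝ)) * Real.log ((J : ℝ) / (2 * π * Real.exp 1) ^ ((1 : ℝ) / 3))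

/-- `φ₊(ρ) = √(log (1/(2πρ)²))`. -/
def phiPlus (ρ : ℝ) : ℝ := Real.sqrt (Real.log (1 / (2 * π * ρ) ^ 2))

variable {J T : ℕ} {Ωs : Type}

/-- True parameter `θ_j = α_{t_j} + Ω_{t_j}^{1/2} τ_j`. -/
def theta (t : Fin J → Fin T) (α : Fin T → V) (Ws : Fin T → M2)
    (τ : Fin J → Ωs → V) (j : Fin J) (ω : Ωs) : V :=
  α (t j) + (Ws (t j)).mulVec (τ j ω)

/-- Observation `Y_j = θ_j + Σ_j^{1/2} ε_j`. -/
def obsY (t : Fin J → Fin T) (α : Fin T → V) (Ws : Fin T → M2) (Ss : Fin J → M2)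
    (τ ε : Fin J → Ωs → V) (j : Fin J) (ω : Ωs) : V :=
  theta t α Ws τ j ω + (Ss j).mulVec (ε j ω)

/-- All observations `Y_{1:J}` as a map into `(ℝ²)^J`. -/
def Yall (t : Fin J → Fin T) (α : Fin T → V) (Ws : Fin T → M2) (Ss : Fin J → M2)
    (τ ε : Fin J → Ωs → V) (ω : Ωs) : Fin J → V :=
  fun j => obsY t α Ws Ss τ ε j ω

/-- Standardized observation `Z_j = Ω_{t_j}^{-1/2}(Y_j - α_{t_j})`. -/
def Zres (t : Fin J → Fin T) (α : Fin T → V) (Ws : Fin T → M2) (Ss : Fin J → M2)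
    (τ ε : Fin J → Ωs → V) (j : Fin J) (ω : Ωs) : V :=
  (Ws (t j))⁻¹.mulVec (obsY t α Ws Ss τ ε j ω - α (t j))

/-- Standardized noise covariance `Ψ_j = Ω_{t_j}^{-1/2} Σ_j Ω_{t_j}^{-1/2}`. -/
def PsiM (t : Fin J → Fin T) (Ws : Fin T → M2) (Ss : Fin J → M2) (j : Fin J) : M2 :=
  (Ws (t j))⁻¹ * (Ss j * Ss j) * (Ws (t j))⁻¹

/-- `Z̄_J = max(max_j ‖Z_j‖₂, 1)`. -/
def Zbar (t : Fin J → Fin T) (α : Fin T → V) (Ws : Fin T → M2) (Ss : Fin J → M2)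
    (τ ε : Fin J → Ωs → V) (ω : Ωs) : ℝ :=
  max (⨆ j, n2 (Zres t α Ws Ss τ ε j ω)) 1

/-- Oracle posterior mean `θ_j^*`. -/
def thetaStar (F0 : Measure V) (t : Fin J → Fin T) (α : Fin T → V) (Ws : Fin T → M2)
    (Ss : Fin J → M2) (τ ε : Fin J → Ωs → V) (j : Fin J) (ω : Ωs) : V :=
  α (t j) + (Ws (t j)).mulVec (postMean F0 (PsiM t Ws Ss j) (Zres t α Ws Ss τ ε j ω))

/-- Estimated standardized observation `Ẑ_j`. -/
def Zhat (t : Fin J → Fin T) (α : Fin T → V) (Ws : Fin T → M2) (Ss : Fin J → M2)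
    (τ ε : Fin J → Ωs → V) (ahat : Fin T → Ωs → V) (Whts : Fin T → Ωs → M2)
    (j : Fin J) (ω : Ωs) : V :=
  (Whts (t j) ω)⁻¹.mulVec (obsY t α Ws Ss τ ε j ω - ahat (t j) ω)

/-- Estimated standardized noise covariance `Ψ̂_j`. -/
def PsiHat (t : Fin J → Fin T) (Ss : Fin J → M2) (Whts : Fin T → Ωs → M2)
    (j : Fin J) (ω : Ωs) : M2 :=
  (Whts (t j) ω)⁻¹ * (Ss j * Ss j) * (Whts (t j) ω)⁻¹

/-- Empirical Bayes posterior mean `θ̂_j^*` built from an estimated prior `F̂`. -/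
def thetaHatStar (Fhat : Ωs → Measure V) (t : Fin J → Fin T) (α : Fin T → V)
    (Ws : Fin T → M2) (Ss : Fin J → M2) (τ ε : Fin J → Ωs → V)
    (ahat : Fin T → Ωs → V) (Whts : Fin T → Ωs → M2) (j : Fin J) (ω : Ωs) : V :=
  ahat (t j) ω + (Whts (t j) ω).mulVec
    (postMean (Fhat ω) (PsiHat t Ss Whts j ω) (Zhat t α Ws Ss τ ε ahat Whts j ω))

/-- `‖χ̂ - χ₀‖_∞`. -/
def chiDist (α : Fin T → V) (Ws : Fin T → M2) (ahat : Fin T → Ωs → V)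
    (Whts : Fin T → Ωs → M2) (ω : Ωs) : ℝ :=
  ⨆ u, max (ninf (ahat u ω - α u)) (opN (Whts u ω - Ws u))

/-- Gradient of the net welfare impact, `(∇w)_j = η_j WTP_j - μ G_j`. -/
def trueGrad (t : Fin J → Fin T) (α : Fin T → V) (Ws : Fin T → M2)
    (τ : Fin J → Ωs → V) (η : Fin J → ℝ) (μv : ℝ) (ω : Ωs) : Fin J → ℝ :=
  fun j => η j * theta t α Ws τ j ω 0 - μv * theta t α Ws τ j ω 1

/-- Sample plug-in gradient `(∇ŵ)_j = η_j WTP̂_j - μ Ĝ_j`. -/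
def plugGrad (t : Fin J → Fin T) (α : Fin T → V) (Ws : Fin T → M2) (Ss : Fin J → M2)
    (τ ε : Fin J → Ωs → V) (η : Fin J → ℝ) (μv : ℝ) (ω : Ωs) : Fin J → ℝ :=
  fun j => η j * obsY t α Ws Ss τ ε j ω 0 - μv * obsY t α Ws Ss τ ε j ω 1

/-- Oracle gradient `(∇w^*)_j = η_j WTP_j^* - μ G_j^*`. -/
def oracleGrad (F0 : Measure V) (t : Fin J → Fin T) (α : Fin T → V) (Ws : Fin T → M2)
    (Ss : Fin J → M2) (τ ε : Fin J → Ωs → V) (η : Fin J → ℝ) (μv : ℝ) (ω : Ωs) :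
    Fin J → ℝ :=
  fun j => η j * thetaStar F0 t α Ws Ss τ ε j ω 0 - μv * thetaStar F0 t α Ws Ss τ ε j ω 1

/-- Empirical Bayes gradient `(∇ŵ^*)_j = η_j WTP̂_j^* - μ Ĝ_j^*`. -/
def ebGrad (Fhat : Ωs → Measure V) (t : Fin J → Fin T) (α : Fin T → V) (Ws : Fin T → M2)
    (Ss : Fin J → M2) (τ ε : Fin J → Ωs → V) (ahat : Fin T → Ωs → V)
    (Whts : Fin T → Ωs → M2) (η : Fin J → ℝ) (μv : ℝ) (ω : Ωs) : Fin J → ℝ :=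
  fun j => η j * thetaHatStar Fhat t α Ws Ss τ ε ahat Whts j ω 0
    - μv * thetaHatStar Fhat t α Ws Ss τ ε ahat Whts j ω 1

/-- The basic data-generating process: `τ_j` i.i.d. from `F₀` (mean zero, identity covariance,
supported in the rectangle — Assumption 1), `ε_j` i.i.d. standard bivariate Gaussian, all of
`τ_1,…,τ_J,ε_1,…,ε_J` jointly independent, and positive (semi)definiteness of the
square-root scale and noise matrices. -/
structure Model [MeasurableSpace Ωs] (P : Measure Ωs) (t : Fin J → Fin T)
    (F0 : Measure V) (τ ε : Fin J → Ωs → V) (α : Fin T → V) (Ws : Fin T → M2)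
    (Ss : Fin J → M2) (swl swh sgl sgh : ℝ) : Prop where
  probP : IsProbabilityMeasure P
  probF : IsProbabilityMeasure F0
  meas_tau : ∀ j, Measurable (τ j)
  meas_eps : ∀ j, Measurable (ε j)
  indep : iIndepFun (β := fun _ : Fin J ⊕ Fin J => V)
    (Sum.elim τ ε) P
  law_tau : ∀ j, Measure.map (τ j) P = F0
  law_eps : ∀ j, Measure.map (ε j) P = stdGauss2
  mean0 : ∫ v, v ∂F0 = 0
  covId : ∀ i k : Fin 2, ∫ v, v i * v k ∂F0 = if i = k then 1 else 0
  suppF : ∀ᵐ v ∂F0, v 0 ∈ Set.Icc swl swh ∧ v 1 ∈ Set.Icc sgl sgh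
  Ws_psd : ∀ u, (Ws u).PosSemidef
  Omega_pd : ∀ u, (Ws u * Ws u).PosDef
  Ss_psd : ∀ j, (Ss j).PosSemidef
  Sigma_pd : ∀ j, (Ss j * Ss j).PosDef

/-- Assumption 3: `c̲ I₂ ⪯ Ω_t ⪯ c̄ I₂` for all types `t`. -/
structure Assump3 (Ws : Fin T → M2) (cl cu : ℝ) : Prop where
  lower : ∀ u, LoewnerLE (cl • (1 : M2)) (Ws u * Ws u)
  upper : ∀ u, LoewnerLE (Ws u * Ws u) (cu • (1 : M2))

/-- Assumption 4 on the location-scale estimators. -/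
structure Assump4 [MeasurableSpace Ωs] (P : Measure Ωs) (t : Fin J → Fin T)
    (α : Fin T → V) (Ws : Fin T → M2) (Ss : Fin J → M2) (τ ε : Fin J → Ωs → V)
    (ahat : Fin T → Ωs → V) (Whts : Fin T → Ωs → M2)
    (cl cu ml mu kl ku C1 C2 : ℝ) : Prop where
  what_psd : ∀ u ω, (Whts u ω).PosSemidef
  what_lower : ∀ u ω, LoewnerLE (cl • (1 : M2)) (Whts u ω * Whts u ω)
  what_upper : ∀ u ω, LoewnerLE (Whts u ω * Whts u ω) (cu • (1 : M2))
  count_lower : ∀ u, ml * J ≤ ((Finset.univ.filter fun j => t j = u).card : ℝ)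
  count_upper : ∀ u, ((Finset.univ.filter fun j => t j = u).card : ℝ) ≤ mu * J
  psi_lower : ∀ j, LoewnerLE (kl • (1 : M2)) (PsiM t Ws Ss j)
  psi_upper : ∀ j, LoewnerLE (PsiM t Ws Ss j) (ku • (1 : M2))
  meas_ahat : ∀ u,
    Measurable[MeasurableSpace.comap (Yall t α Ws Ss τ ε) inferInstance] (ahat u)
  meas_What : ∀ u,
    Measurable[MeasurableSpace.comap (Yall t α Ws Ss τ ε) inferInstance] (Whts u)
  chi_tail : P {ω | chiDist α Ws ahat Whts ω > C1 * Real.sqrt (Real.log J / J)}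
    ≤ ENNReal.ofReal (C2 / (J : ℝ) ^ 2)

/-- Assumption 5 on the estimated prior `F̂_J` (approximate NPMLE with bounded support). -/
structure Assump5 [MeasurableSpace Ωs] (P : Measure Ωs) (t : Fin J → Fin T)
    (α : Fin T → V) (Ws : Fin T → M2) (Ss : Fin J → M2) (τ ε : Fin J → Ωs → V)
    (ahat : Fin T → Ωs → V) (Whts : Fin T → Ωs → M2) (Fhat : Ωs → Measure V) : Prop where
  meas : Measurable[MeasurableSpace.comap (Yall t α Ws Ss τ ε) inferInstance] Fhat
  prob : ∀ ω, IsProbabilityMeasure (Fhat ω)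
  nearOpt : ∀ᵐ ω ∂P,
    sSup {r : ℝ | ∃ F : Measure V, IsProbabilityMeasure F ∧
        r = (1 / (J : ℝ)) * ∑ j, Real.log
          (∫ x, gk (PsiHat t Ss Whts j ω) (Zhat t α Ws Ss τ ε ahat Whts j ω - x) ∂F)}
      - kappaJ J
    ≤ (1 / (J : ℝ)) * ∑ j, Real.log
        (∫ x, gk (PsiHat t Ss Whts j ω) (Zhat t α Ws Ss τ ε ahat Whts j ω - x) ∂(Fhat ω))
  suppIn : ∀ᵐ ω ∂P,
    (Fhat ω) {x : V | n2 x ≤ ⨆ j, max (n2 (Zhat t α Ws Ss τ ε ahat Whts j ω)) 1}ᶜ = 0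

/-!
Take `F₀` uniform on `{-1,1}²`, `α = 0`, `Ω = I`, `η = 1`, `μ = 0`, so that the `j`-th plug-in
error is `τ_{j,0} - Y_{j,0} = -(Σ_j ε_j)_0`. The rule `v(Y)_j = (N_p / J) sgn (Y_{j,0})` lies in
`B_p` and is `Y`-measurable, so the conditional expectation drops out and coordinate `j`
contributes `-(N_p / J) E[X sgn (τ_{j,0} + X)]` with `X = (Σ_j ε_j)_0`. Averaging over
`τ_{j,0} = ±1`, `x sgn (1 + x) + x sgn (x - 1) ≥ 4 · 1{x ≥ 2}`, and `P(X ≥ 2)` is at least the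
square of a standard Gaussian tail depending only on `k̲`, since the row of `Σ_j^{1/2}` defining
`X` has squared norm at least `k̲`.
-/

/-- Sign with the convention `sgn 0 = 1`, so that `|sgn x| = 1` everywhere. -/
def sgn (x : ℝ) : ℝ := if 0 ≤ x then 1 else -1

lemma abs_sgn (x : ℝ) : |sgn x| = 1 := by unfold sgn; split <;> simp

@[fun_prop]
lemma measurable_sgn : Measurable sgn :=
  Measurable.ite measurableSet_Ici measurable_const measurable_const

lemma abs_le_one_of_mem_Bp {p : ℝ≥0∞} (hp : p ≠ 0) {v : Fin J → ℝ} (hv : v ∈ Bp J p)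
    (j : Fin J) : |v j| ≤ 1 := by
  replace hv : pN p v ≤ 1 := hv
  unfold pN at hv
  split_ifs at hv with htop
  · exact (le_ciSup (Set.finite_range _).bddAbove j).trans hv
  · have hp0 : 0 < p.toReal := ENNReal.toReal_pos hp htop
    calc |v j| = (|v j| ^ p.toReal) ^ (1 / p.toReal) := by
          rw [← Real.rpow_mul (abs_nonneg _), mul_one_div_cancel hp0.ne', Real.rpow_one]
      _ ≤ (∑ i, |v i| ^ p.toReal) ^ (1 / p.toReal) := by
          gcongr
          exact Finset.single_le_sum (f := fun i => |v i| ^ p.toReal) (fun i _ => by positivity)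
            (Finset.mem_univ j)
      _ ≤ 1 := hv

lemma Np_div_eq_rpow (hJ : 0 < J) {p : ℝ≥0∞} (hp : p ≠ 0) (htop : p ≠ ⊤) :
    Np J p / J = (J : ℝ) ^ (-p.toReal⁻¹) := by
  have hp0 : p.toReal ≠ 0 := (ENNReal.toReal_pos hp htop).ne'
  rw [Np, if_neg htop, ← Real.rpow_sub_one (by positivity)]
  congr 1
  field_simp
  ring

lemma mem_Bp_of_abs_eq (hJ : 0 < J) {p : ℝ≥0∞} (hp : p ≠ 0) {v : Fin J → ℝ}
    (hv : ∀ j, |v j| = Np J p / J) : v ∈ Bp J p := by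
  have : NeZero J := ⟨hJ.ne'⟩
  change pN p v ≤ 1
  unfold pN
  split_ifs with htop
  · refine ciSup_le fun j => ?_
    rw [hv, Np, if_pos htop, div_self (by positivity)]
  · have hp0 : p.toReal ≠ 0 := (ENNReal.toReal_pos hp htop).ne'
    simp only [hv, Np_div_eq_rpow hJ hp htop, Finset.sum_const, Finset.card_univ,
      Fintype.card_fin, nsmul_eq_mul]
    rw [← Real.rpow_mul (by positivity), neg_mul, inv_mul_cancel₀ hp0, Real.rpow_neg_one,
      mul_inv_cancel₀ (by positivity), Real.one_rpow]

lemma Np_pos (hJ : 0 < J) (p : ℝ≥0∞) : 0 < Np J p := by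
  unfold Np; split_ifs <;> positivity

section SpendingObjectives

variable [MeasurableSpace Ωs]

def spendingObjectives (P : Measure Ωs) (Y : Ωs → Fin J → V) (Δ : Ωs → Fin J → ℝ)
    (p : ℝ≥0∞) : Set ℝ :=
  {r | ∃ v : (Fin J → V) → (Fin J → ℝ), Measurable v ∧ (∀ y, v y ∈ Bp J p) ∧
    r = ∫ ω, |∑ j, Δ ω j * v (Y ω) j| ∂P}

lemma bddAbove_spendingObjectives {P : Measure Ωs} {Y : Ωs → Fin J → V}
    {Δ : Ωs → Fin J → ℝ} {p : ℝ≥0∞} (hp : p ≠ 0) (hΔ : ∀ j, Integrable (fun ω => Δ ω j) P) :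
    BddAbove (spendingObjectives P Y Δ p) := by
  refine ⟨∫ ω, ∑ j, |Δ ω j| ∂P, ?_⟩
  rintro r ⟨v, -, hvB, rfl⟩
  refine integral_mono_of_nonneg (.of_forall fun ω => abs_nonneg _)
    (integrable_finsetSum _ fun j _ => (hΔ j).abs) (.of_forall fun ω => ?_)
  refine (Finset.abs_sum_le_sum_abs _ _).trans (Finset.sum_le_sum fun j _ => ?_)
  rw [abs_mul]
  exact mul_le_of_le_one_right (abs_nonneg _) (abs_le_one_of_mem_Bp hp (hvB _) j)

end SpendingObjectives

def fourPointUniform : Measure V :=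
  (4 : ℝ≥0∞)⁻¹ • (Measure.dirac ![1, 1] + Measure.dirac ![1, -1]
    + Measure.dirac ![-1, 1] + Measure.dirac ![-1, -1])

section FourPointUniform

variable {E : Type*} [NormedAddCommGroup E]

lemma integrable_fourPointUniform (f : V → E) : Integrable f fourPointUniform := by
  have h : ∀ a : V, Integrable f (Measure.dirac a) := fun a => integrable_dirac enorm_lt_top
  exact ((((h _).add_measure (h _)).add_measure (h _)).add_measure (h _)).smul_measure (by simp)

lemma integral_fourPointUniform [NormedSpace ℝ E] [CompleteSpace E] (f : V → E) :
    ∫ v, f v ∂fourPointUniform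
      = (4 : ℝ)⁻¹ • (f ![1, 1] + f ![1, -1] + f ![-1, 1] + f ![-1, -1]) := by
  have h : ∀ a : V, Integrable f (Measure.dirac a) := fun a => integrable_dirac enorm_lt_top
  rw [fourPointUniform, integral_smul_measure,
    integral_add_measure (((h _).add_measure (h _)).add_measure (h _)) (h _),
    integral_add_measure ((h _).add_measure (h _)) (h _), integral_add_measure (h _) (h _)]
  simp

end FourPointUniform

instance : IsProbabilityMeasure fourPointUniform := by
  constructor
  simp only [fourPointUniform, Measure.smul_apply, Measure.add_apply, measure_univ, smul_eq_mul]
  rw [show (1 + 1 + 1 + 1 : ℝ≥0∞) = 4 by norm_num,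
    ENNReal.inv_mul_cancel (by norm_num) (by norm_num)]

lemma integral_id_fourPointUniform : ∫ v, v ∂fourPointUniform = 0 := by
  rw [integral_fourPointUniform fun v => v]
  ext i
  fin_cases i <;> norm_num

lemma integral_mul_fourPointUniform (i k : Fin 2) :
    ∫ v, v i * v k ∂fourPointUniform = if i = k then 1 else 0 := by
  rw [integral_fourPointUniform fun v => v i * v k]
  fin_cases i <;> fin_cases k <;> norm_num

lemma ae_mem_Icc_fourPointUniform :
    ∀ᵐ v ∂fourPointUniform, v 0 ∈ Set.Icc (-1 : ℝ) 1 ∧ v 1 ∈ Set.Icc (-1 : ℝ) 1 := by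
  refine Measure.ae_smul_measure ?_ _
  simp only [ae_add_measure_iff, ae_dirac_eq, Filter.eventually_pure]
  norm_num

instance : IsProbabilityMeasure stdGauss2 :=
  Measure.isProbabilityMeasure_map (by fun_prop)

lemma integrable_dotProduct_stdGauss2 (a : V) : Integrable (fun e => a ⬝ᵥ e) stdGauss2 := by
  have hN : Integrable (fun x : ℝ => x) (gaussianReal 0 1) :=
    (memLp_id_gaussianReal 1).integrable le_rfl
  have hid : Integrable id stdGauss2 := by
    rw [stdGauss2, integrable_map_measure (by fun_prop) (by fun_prop), integrable_pi_iff]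
    intro k
    fin_cases k
    · simpa using hN.comp_fst (gaussianReal 0 1)
    · simpa using hN.comp_snd (gaussianReal 0 1)
  exact integrable_finsetSum _ fun i _ => (integrable_pi_iff.1 hid i).const_mul _

def stdGaussTail (c : ℝ) : ℝ := (gaussianReal 0 1).real (Set.Ici c)

lemma stdGaussTail_pos (c : ℝ) : 0 < stdGaussTail c := by
  refine ENNReal.toReal_pos (fun h0 => ?_) (measure_ne_top _ _)
  have := gaussianReal_absolutelyContinuous' 0 one_ne_zero h0
  simp at this

lemma stdGaussTail_le_measureReal (a c : ℝ) :
    stdGaussTail c ≤ (gaussianReal 0 1).real {x | |a| * c ≤ a * x} := by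
  rcases lt_trichotomy a 0 with ha | rfl | ha
  · have hset : {x : ℝ | |a| * c ≤ a * x} = (fun x => -x) ⁻¹' Set.Ici c := by
      ext x
      simp only [abs_of_neg ha, Set.mem_ofPred_eq, Set.mem_preimage, Set.mem_Ici]
      constructor <;> intro h <;> nlinarith
    rw [stdGaussTail, hset, ← map_measureReal_apply (by fun_prop) measurableSet_Ici,
      gaussianReal_map_neg, neg_zero]
  · simp [stdGaussTail, measureReal_le_one]
  · have hset : {x : ℝ | |a| * c ≤ a * x} = Set.Ici c := by
      ext x
      simp [abs_of_pos ha, mul_le_mul_iff_right₀ ha]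
    rw [stdGaussTail, hset]

/-- On the product of the half-lines `{x | |a i| c ≤ a i x}` one has
`a ⬝ᵥ e ≥ (|a 0| + |a 1|) c ≥ √kl c = 2`. -/
lemma stdGaussTail_sq_le_measureReal {kl : ℝ} (hkl : 0 < kl) {a : V} (ha : kl ≤ a ⬝ᵥ a) :
    stdGaussTail (2 / √kl) ^ 2 ≤ stdGauss2.real {e | 2 ≤ a ⬝ᵥ e} := by
  set c := 2 / √kl
  set A : Fin 2 → Set ℝ := fun i => {x | |a i| * c ≤ a i * x}
  have hsub : A 0 ×ˢ A 1 ⊆ (fun q : ℝ × ℝ => (![q.1, q.2] : V)) ⁻¹' {e | 2 ≤ a ⬝ᵥ e} := by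
    rintro q ⟨h0, h1⟩
    have hsqrt : √kl ≤ |a 0| + |a 1| := by
      rw [dotProduct, Fin.sum_univ_two] at ha
      refine Real.sqrt_le_iff.mpr ⟨by positivity, ?_⟩
      nlinarith [sq_abs (a 0), sq_abs (a 1), abs_nonneg (a 0), abs_nonneg (a 1)]
    have hc : √kl * c = 2 := mul_div_cancel₀ _ (Real.sqrt_pos.2 hkl).ne'
    have : √kl * c ≤ (|a 0| + |a 1|) * c := by gcongr
    simp only [A, Set.mem_ofPred_eq] at h0 h1
    simp only [Set.mem_preimage, Set.mem_ofPred_eq, dotProduct, Fin.sum_univ_two,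
      Matrix.cons_val_zero, Matrix.cons_val_one]
    linarith
  calc stdGaussTail c ^ 2 ≤ (gaussianReal 0 1).real (A 0) * (gaussianReal 0 1).real (A 1) := by
        rw [sq]
        exact mul_le_mul (stdGaussTail_le_measureReal _ _) (stdGaussTail_le_measureReal _ _)
          (stdGaussTail_pos _).le measureReal_nonneg
    _ = ((gaussianReal 0 1).prod (gaussianReal 0 1)).real (A 0 ×ˢ A 1) :=
        (measureReal_prod_prod _ _).symm
    _ ≤ stdGauss2.real {e | 2 ≤ a ⬝ᵥ e} := by
        rw [stdGauss2, map_measureReal_apply (by fun_prop)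
          (measurableSet_le measurable_const (by fun_prop))]
        exact measureReal_mono hsub

lemma indicator_le_mul_sgn_add_mul_sgn (x : ℝ) :
    (Set.Ici 2).indicator (fun _ => (4 : ℝ)) x ≤ x * sgn (1 + x) + x * sgn (-1 + x) := by
  unfold sgn
  by_cases hx : x ∈ Set.Ici 2
  · rw [Set.indicator_of_mem hx, if_pos (by linarith [Set.mem_Ici.1 hx]),
      if_pos (by linarith [Set.mem_Ici.1 hx])]
    linarith [Set.mem_Ici.1 hx]
  · rw [Set.indicator_of_notMem hx]
    rw [Set.mem_Ici, not_le] at hx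
    split_ifs <;> nlinarith

lemma two_mul_measureReal_le_integral_mul_sgn {β : Type*} [MeasurableSpace β] {ν : Measure β}
    [IsProbabilityMeasure ν] {X : β → ℝ} (hXm : Measurable X) (hX : Integrable X ν) :
    2 * ν.real {b | 2 ≤ X b}
      ≤ ∫ q : V × β, X q.2 * sgn (q.1 0 + X q.2) ∂(fourPointUniform.prod ν) := by
  have hint : ∀ s : ℝ, Integrable (fun b => X b * sgn (s + X b)) ν := fun s =>
    hX.mul_bdd (by fun_prop : Measurable _).aestronglyMeasurable (c := 1)
      (.of_forall fun b => (abs_sgn _).le)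
  have hprod : Integrable (fun q : V × β => X q.2 * sgn (q.1 0 + X q.2))
      (fourPointUniform.prod ν) :=
    (hX.comp_snd fourPointUniform).mul_bdd (by fun_prop : Measurable _).aestronglyMeasurable
      (c := 1) (.of_forall fun q => (abs_sgn _).le)
  have hsum : 4 * ν.real {b | 2 ≤ X b}
      ≤ ∫ b, X b * sgn (1 + X b) ∂ν + ∫ b, X b * sgn (-1 + X b) ∂ν := by
    rw [← integral_add (hint 1) (hint (-1))]
    calc 4 * ν.real {b | 2 ≤ X b}
        = ∫ b, (X ⁻¹' Set.Ici 2).indicator (fun _ => (4 : ℝ)) b ∂ν := by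
          rw [integral_indicator_const _ (hXm measurableSet_Ici), smul_eq_mul, mul_comm]
          rfl
      _ ≤ _ := integral_mono_of_nonneg
          (.of_forall fun b => Set.indicator_nonneg (fun _ _ => by norm_num) _)
          ((hint 1).add (hint (-1))) (.of_forall fun b => indicator_le_mul_sgn_add_mul_sgn (X b))
  rw [integral_prod _ hprod, integral_fourPointUniform]
  simp only [Matrix.cons_val_zero, smul_eq_mul]
  linarith

lemma two_mul_stdGaussTail_sq_le_integral {kl : ℝ} (hkl : 0 < kl) {a : V} (ha : kl ≤ a ⬝ᵥ a) :
    2 * stdGaussTail (2 / √kl) ^ 2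
      ≤ ∫ q : V × V, (a ⬝ᵥ q.2) * sgn (q.1 0 + a ⬝ᵥ q.2) ∂(fourPointUniform.prod stdGauss2) := by
  exact (mul_le_mul_of_nonneg_left (stdGaussTail_sq_le_measureReal hkl ha) two_pos.le).trans
    (two_mul_measureReal_le_integral_mul_sgn (by fun_prop) (integrable_dotProduct_stdGauss2 a))

lemma integral_condExp_sub_mul {Ω : Type*} {m mΩ : MeasurableSpace Ω} {μ : Measure[mΩ] Ω}
    [IsFiniteMeasure μ] (hm : m ≤ mΩ) {f g w : Ω → ℝ} (hf : Integrable f μ)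
    (hg : Integrable g μ) (hgm : StronglyMeasurable[m] g) (hwm : StronglyMeasurable[m] w)
    {c : ℝ} (hw : ∀ ω, ‖w ω‖ ≤ c) :
    ∫ ω, (μ[f|m] ω - g ω) * w ω ∂μ = ∫ ω, (f ω - g ω) * w ω ∂μ := by
  have : IsFiniteMeasure (μ.trim hm) := isFiniteMeasure_trim hm
  calc ∫ ω, (μ[f|m] ω - g ω) * w ω ∂μ = ∫ ω, μ[w * (f - g)|m] ω ∂μ := by
        refine integral_congr_ae ?_
        filter_upwards [condExp_sub hf hg m,
          condExp_stronglyMeasurable_mul_of_bound hm hwm (hf.sub hg) c (.of_forall hw)]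
          with ω hsub hmul
        rw [hmul, Pi.mul_apply, hsub, Pi.sub_apply, condExp_of_stronglyMeasurable hm hgm hg,
          mul_comm]
    _ = ∫ ω, (f ω - g ω) * w ω ∂μ := by
        rw [integral_condExp hm]
        simp only [Pi.mul_apply, Pi.sub_apply, mul_comm]

lemma le_dotProduct_self_of_loewnerLE {S : M2} (hS : S.IsHermitian) {kl : ℝ}
    (h : LoewnerLE (kl • 1) (S * S)) (i : Fin 2) : kl ≤ S i ⬝ᵥ S i := by
  have hdiag : 0 ≤ (S * S - kl • 1) i i := h.diag_nonneg
  have hSS : (S * S) i i = S i ⬝ᵥ S i := by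
    simp only [Matrix.mul_apply, dotProduct]
    exact Finset.sum_congr rfl fun k _ => by rw [← hS.apply i k, star_trivial]
  simp only [Matrix.sub_apply, Matrix.smul_apply, Matrix.one_apply_eq, smul_eq_mul, mul_one,
    hSS] at hdiag
  linarith

section ZeroOne

variable {t : Fin J → Fin T} {τ ε : Fin J → Ωs → V} {Ss : Fin J → M2}

lemma obsY_zero_one (j : Fin J) (ω : Ωs) :
    obsY t (fun _ => 0) (fun _ => 1) Ss τ ε j ω = τ j ω + Ss j *ᵥ ε j ω := by
  simp [obsY, theta]

lemma Yall_zero_one_apply (ω : Ωs) (j : Fin J) :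
    Yall t (fun _ => 0) (fun _ => 1) Ss τ ε ω j 0 = τ j ω 0 + Ss j 0 ⬝ᵥ ε j ω := by
  simp [Yall, obsY_zero_one]

lemma trueGrad_zero_one (ω : Ωs) (j : Fin J) :
    trueGrad t (fun _ => 0) (fun _ => 1) τ (fun _ => 1) 0 ω j = τ j ω 0 := by
  simp [trueGrad, theta]

lemma plugGrad_zero_one (ω : Ωs) (j : Fin J) :
    plugGrad t (fun _ => 0) (fun _ => 1) Ss τ ε (fun _ => 1) 0 ω j
      = Yall t (fun _ => 0) (fun _ => 1) Ss τ ε ω j 0 := by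
  simp [plugGrad, Yall]

variable [MeasurableSpace Ωs] {P : Measure Ωs} {F0 : Measure V} {swl swh sgl sgh : ℝ}

lemma measurable_Yall_zero_one
    (hM : Model P t F0 τ ε (fun _ => 0) (fun _ => 1) Ss swl swh sgl sgh) :
    Measurable (Yall t (fun _ => 0) (fun _ => 1) Ss τ ε) := by
  refine measurable_pi_lambda _ fun j => ?_
  simp only [Yall, obsY_zero_one]
  have := hM.meas_tau j
  have := hM.meas_eps j
  fun_prop

lemma integrable_trueGrad_zero_one
    (hM : Model P t F0 τ ε (fun _ => 0) (fun _ => 1) Ss swl swh sgl sgh)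
    (hF0 : Integrable (fun v : V => v 0) F0) :
    Integrable (trueGrad t (fun _ => 0) (fun _ => 1) τ (fun _ => 1) 0) P := by
  refine integrable_pi_iff.2 fun j => ?_
  simp only [trueGrad_zero_one]
  exact (integrable_map_measure (g := fun v : V => v 0)
    (by fun_prop : Measurable _).aestronglyMeasurable (hM.meas_tau j).aemeasurable).1
    (by rwa [hM.law_tau j])

lemma integrable_plugGrad_zero_one
    (hM : Model P t F0 τ ε (fun _ => 0) (fun _ => 1) Ss swl swh sgl sgh)
    (hF0 : Integrable (fun v : V => v 0) F0) (j : Fin J) :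
    Integrable (fun ω => plugGrad t (fun _ => 0) (fun _ => 1) Ss τ ε (fun _ => 1) 0 ω j) P := by
  have hε : Integrable (fun ω => Ss j 0 ⬝ᵥ ε j ω) P := by
    refine (integrable_map_measure (g := fun e : V => Ss j 0 ⬝ᵥ e)
      (by fun_prop : Measurable _).aestronglyMeasurable (hM.meas_eps j).aemeasurable).1 ?_
    rw [hM.law_eps j]
    exact integrable_dotProduct_stdGauss2 _
  have hτ : Integrable (fun ω => τ j ω 0) P := by
    simpa only [trueGrad_zero_one] using integrable_pi_iff.1 (integrable_trueGrad_zero_one hM hF0) j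
  simp only [plugGrad_zero_one, Yall_zero_one_apply]
  exact hτ.add hε

lemma integral_condExp_trueGrad_sub_plugGrad_mul_sgn
    (hM : Model P t F0 τ ε (fun _ => 0) (fun _ => 1) Ss swl swh sgl sgh)
    (hF0 : Integrable (fun v : V => v 0) F0) (j : Fin J) (c : ℝ) :
    ∫ ω, (P[trueGrad t (fun _ => 0) (fun _ => 1) τ (fun _ => 1) 0
            | MeasurableSpace.comap (Yall t (fun _ => 0) (fun _ => 1) Ss τ ε) inferInstance] ω j
          - plugGrad t (fun _ => 0) (fun _ => 1) Ss τ ε (fun _ => 1) 0 ω j)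
        * (c * sgn (Yall t (fun _ => 0) (fun _ => 1) Ss τ ε ω j 0)) ∂P
      = -c * ∫ q : V × V, (Ss j 0 ⬝ᵥ q.2) * sgn (q.1 0 + Ss j 0 ⬝ᵥ q.2) ∂(F0.prod stdGauss2) := by
  have := hM.probP
  have := hM.meas_tau j
  have := hM.meas_eps j
  set Y := Yall t (fun _ => 0) (fun _ => 1) Ss τ ε
  set G := trueGrad t (fun _ => 0) (fun _ => 1) τ (fun _ => 1) 0
  have hG : Integrable G P := integrable_trueGrad_zero_one hM hF0
  have hm : MeasurableSpace.comap Y inferInstance ≤ _ := (measurable_Yall_zero_one hM).comap_le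
  have hYj : Measurable[MeasurableSpace.comap Y inferInstance] fun ω => Y ω j 0 :=
    (by fun_prop : Measurable fun y : Fin J → V => y j 0).comp (comap_measurable Y)
  have hlaw : P.map (fun ω => (τ j ω, ε j ω)) = F0.prod stdGauss2 := by
    rw [(indepFun_iff_map_prod_eq_prod_map_map (hM.meas_tau j).aemeasurable
      (hM.meas_eps j).aemeasurable).1 (hM.indep.indepFun (i := .inl j) (j := .inr j) (by simp)),
      hM.law_tau j, hM.law_eps j]
  calc _ = ∫ ω, (P[fun ω => G ω j|MeasurableSpace.comap Y inferInstance] ω - Y ω j 0)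
          * (c * sgn (Y ω j 0)) ∂P := by
        refine integral_congr_ae ?_
        filter_upwards [(ContinuousLinearMap.proj (R := ℝ) j).comp_condExp_comm hG] with ω hω
        simp only [Function.comp_apply, ContinuousLinearMap.proj_apply] at hω
        rw [hω, plugGrad_zero_one]
        rfl
    _ = ∫ ω, (G ω j - Y ω j 0) * (c * sgn (Y ω j 0)) ∂P := by
        refine integral_condExp_sub_mul hm (integrable_pi_iff.1 hG j)
          ((integrable_plugGrad_zero_one hM hF0 j).congr
            (.of_forall fun ω => plugGrad_zero_one ω j))
          hYj.stronglyMeasurable ((measurable_sgn.comp hYj).const_mul c).stronglyMeasurable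
          (c := |c|) (fun ω => by simp [abs_sgn])
    _ = ∫ ω, -c * ((Ss j 0 ⬝ᵥ ε j ω) * sgn (τ j ω 0 + Ss j 0 ⬝ᵥ ε j ω)) ∂P := by
        congr 1
        ext ω
        simp only [Y, G, Yall_zero_one_apply, trueGrad_zero_one]
        ring
    _ = _ := by
        rw [integral_const_mul, ← hlaw, integral_map (by fun_prop)
          (by fun_prop : Measurable _).aestronglyMeasurable]

end ZeroOne

section Bound

variable [MeasurableSpace Ωs] {P : Measure Ωs} {t : Fin J → Fin T} {τ ε : Fin J → Ωs → V}
  {Ss : Fin J → M2} {swl swh sgl sgh : ℝ}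

lemma Np_mul_le_sSup_spendingObjectives {p : ℝ≥0∞} (hp : p ≠ 0) (hJ : 0 < J) {kl : ℝ}
    (hkl : 0 < kl)
    (hM : Model P t fourPointUniform τ ε (fun _ => 0) (fun _ => 1) Ss swl swh sgl sgh)
    (hPsi : ∀ j, LoewnerLE (kl • 1) (PsiM t (fun _ => 1) Ss j)) :
    Np J p * (2 * stdGaussTail (2 / √kl) ^ 2)
      ≤ sSup (spendingObjectives P (Yall t (fun _ => 0) (fun _ => 1) Ss τ ε)
          (fun ω j => P[trueGrad t (fun _ => 0) (fun _ => 1) τ (fun _ => 1) 0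
              | MeasurableSpace.comap (Yall t (fun _ => 0) (fun _ => 1) Ss τ ε) inferInstance] ω j
            - plugGrad t (fun _ => 0) (fun _ => 1) Ss τ ε (fun _ => 1) 0 ω j) p) := by
  have := hM.probP
  set K := 2 * stdGaussTail (2 / √kl) ^ 2
  set c := Np J p / J
  have hc : 0 < c := div_pos (Np_pos hJ p) (by exact_mod_cast hJ)
  set Y := Yall t (fun _ => 0) (fun _ => 1) Ss τ ε
  set Δ : Ωs → Fin J → ℝ := fun ω j => P[trueGrad t (fun _ => 0) (fun _ => 1) τ (fun _ => 1) 0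
      | MeasurableSpace.comap Y inferInstance] ω j
    - plugGrad t (fun _ => 0) (fun _ => 1) Ss τ ε (fun _ => 1) 0 ω j
  set v : (Fin J → V) → Fin J → ℝ := fun y j => c * sgn (y j 0)
  have hv : Measurable v := by fun_prop
  have hvY : Measurable fun ω => v (Y ω) := hv.comp (measurable_Yall_zero_one hM)
  have habs : ∀ y j, |v y j| = c := fun y j => by simp [v, abs_sgn, abs_of_pos hc]
  have hΔ : ∀ j, Integrable (fun ω => Δ ω j) P := fun j =>
    have hcond : Integrable (fun ω => P[trueGrad t (fun _ => 0) (fun _ => 1) τ (fun _ => 1) 0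
        | MeasurableSpace.comap Y inferInstance] ω j) P :=
      integrable_pi_iff.1 integrable_condExp j
    hcond.sub (integrable_plugGrad_zero_one hM (integrable_fourPointUniform _) j)
  have hint : ∀ j, Integrable (fun ω => Δ ω j * v (Y ω) j) P := fun j =>
    (hΔ j).mul_bdd ((measurable_pi_apply j).comp hvY).aestronglyMeasurable
      (.of_forall fun ω => (habs _ j).le)
  have hterm : ∀ j, ∫ ω, Δ ω j * v (Y ω) j ∂P ≤ -(c * K) := fun j => by
    have hSS : kl ≤ Ss j 0 ⬝ᵥ Ss j 0 :=
      le_dotProduct_self_of_loewnerLE (hM.Ss_psd j).isHermitian (by simpa [PsiM] using hPsi j) 0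
    rw [integral_condExp_trueGrad_sub_plugGrad_mul_sgn hM (integrable_fourPointUniform _) j c]
    nlinarith [two_mul_stdGaussTail_sq_le_integral hkl hSS]
  calc Np J p * K = -∑ _j : Fin J, -(c * K) := by
        simp only [Finset.sum_neg_distrib, Finset.sum_const, Finset.card_univ, Fintype.card_fin,
          nsmul_eq_mul, neg_neg, c]
        field_simp
    _ ≤ -∫ ω, ∑ j, Δ ω j * v (Y ω) j ∂P := by
        rw [integral_finsetSum _ fun j _ => hint j]
        exact neg_le_neg (Finset.sum_le_sum fun j _ => hterm j)
    _ ≤ ∫ ω, |∑ j, Δ ω j * v (Y ω) j| ∂P := (neg_le_abs _).trans abs_integral_le_integral_abs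
    _ ≤ _ := le_csSup (bddAbove_spendingObjectives hp hΔ)
        ⟨v, hv, fun y => mem_Bp_of_abs_eq hJ hp (habs y), rfl⟩

end Bound

theorem prop_plug_in_objective_general (p : ℝ≥0∞) (hp : 1 ≤ p) (kl ku : ℝ)
    (hkl : 0 < kl) :
    ∃ (F0 : Measure V) (swl swh sgl sgh : ℝ) (α0 : V) (Ws0 : M2)
      (η0 muv Mbar cl cu : ℝ),
      IsProbabilityMeasure F0 ∧
      (∫ v, v ∂F0 = 0) ∧
      (∀ i k : Fin 2, ∫ v, v i * v k ∂F0 = if i = k then 1 else 0) ∧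
      (∀ᵐ v ∂F0, v 0 ∈ Set.Icc swl swh ∧ v 1 ∈ Set.Icc sgl sgh) ∧
      |η0| ≤ Mbar ∧ 0 < cl ∧ cl ≤ cu ∧
      Ws0.PosSemidef ∧ (Ws0 * Ws0).PosDef ∧
      LoewnerLE (cl • (1 : M2)) (Ws0 * Ws0) ∧ LoewnerLE (Ws0 * Ws0) (cu • (1 : M2)) ∧
      ∃ K : ℝ, 0 < K ∧
        ∀ (J T : ℕ), 1 ≤ J → 1 ≤ T →
        ∀ (Ωs : Type) (_ : MeasurableSpace Ωs) (P : Measure Ωs)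
          (t : Fin J → Fin T) (τ ε : Fin J → Ωs → V) (Ss : Fin J → M2),
          Model P t F0 τ ε (fun _ => α0) (fun _ => Ws0) Ss swl swh sgl sgh →
          (∀ j, LoewnerLE (kl • (1 : M2)) (PsiM t (fun _ => Ws0) Ss j) ∧
                LoewnerLE (PsiM t (fun _ => Ws0) Ss j) (ku • (1 : M2))) →
          K ≤ (1 / Np J p) *
            sSup {r : ℝ | ∃ v : (Fin J → V) → (Fin J → ℝ),
              Measurable v ∧ (∀ y, v y ∈ Bp J p) ∧
              r = ∫ ω, |∑ j,
                  (MeasureTheory.condExp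
                      (MeasurableSpace.comap (Yall t (fun _ => α0) (fun _ => Ws0) Ss τ ε)
                        inferInstance) P
                      (trueGrad t (fun _ => α0) (fun _ => Ws0) τ (fun _ => η0) muv) ω j
                    - plugGrad t (fun _ => α0) (fun _ => Ws0) Ss τ ε (fun _ => η0) muv ω j)
                  * v (Yall t (fun _ => α0) (fun _ => Ws0) Ss τ ε ω) j| ∂P} := by
  have hLoewner : LoewnerLE ((1 : ℝ) • 1) (1 * 1) ∧ LoewnerLE (1 * 1) ((1 : ℝ) • 1) := by
    simp [LoewnerLE, PosSemidef.zero]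
  refine ⟨fourPointUniform, -1, 1, -1, 1, 0, 1, 1, 0, 1, 1, 1, inferInstance,
    integral_id_fourPointUniform, integral_mul_fourPointUniform, ae_mem_Icc_fourPointUniform,
    by norm_num, one_pos, le_rfl, .one, by simpa using .one, hLoewner.1, hLoewner.2,
    2 * stdGaussTail (2 / √kl) ^ 2, mul_pos two_pos (pow_pos (stdGaussTail_pos _) 2), ?_⟩
  intro J T hJ _ Ωs _ P t τ ε Ss hM hPsi
  rw [one_div, le_inv_mul_iff₀ (Np_pos hJ p)]
  exact Np_mul_le_sSup_spendingObjectives (zero_lt_one.trans_le hp).ne' hJ hkl hM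
    fun j => (hPsi j).1

/-- Proposition 1, part 1: failure of the sample plug-in objective. -/
theorem prop_plug_in_objective (p : ℝ≥0∞) (hp : 1 ≤ p) (kl ku : ℝ)
    (hkl : 0 < kl) (hku : kl ≤ ku) :
    ∃ (F0 : Measure V) (swl swh sgl sgh : ℝ) (α0 : V) (Ws0 : M2)
      (η0 muv Mbar cl cu : ℝ),
      IsProbabilityMeasure F0 ∧
      (∫ v, v ∂F0 = 0) ∧
      (∀ i k : Fin 2, ∫ v, v i * v k ∂F0 = if i = k then 1 else 0) ∧
      (∀ᵐ v ∂F0, v 0 ∈ Set.Icc swl swh ∧ v 1 ∈ Set.Icc sgl sgh) ∧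
      |η0| ≤ Mbar ∧ 0 < cl ∧ cl ≤ cu ∧
      Ws0.PosSemidef ∧ (Ws0 * Ws0).PosDef ∧
      LoewnerLE (cl • (1 : M2)) (Ws0 * Ws0) ∧ LoewnerLE (Ws0 * Ws0) (cu • (1 : M2)) ∧
      ∃ K : ℝ, 0 < K ∧
        ∀ (J T : ℕ), 1 ≤ J → 1 ≤ T →
        ∀ (Ωs : Type) (_ : MeasurableSpace Ωs) (P : Measure Ωs)
          (t : Fin J → Fin T) (τ ε : Fin J → Ωs → V) (Ss : Fin J → M2),
          Model P t F0 τ ε (fun _ => α0) (fun _ => Ws0) Ss swl swh sgl sgh →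
          (∀ j, LoewnerLE (kl • (1 : M2)) (PsiM t (fun _ => Ws0) Ss j) ∧
                LoewnerLE (PsiM t (fun _ => Ws0) Ss j) (ku • (1 : M2))) →
          K ≤ (1 / Np J p) *
            sSup {r : ℝ | ∃ v : (Fin J → V) → (Fin J → ℝ),
              Measurable v ∧ (∀ y, v y ∈ Bp J p) ∧
              r = ∫ ω, |∑ j,
                  (MeasureTheory.condExp
                      (MeasurableSpace.comap (Yall t (fun _ => α0) (fun _ => Ws0) Ss τ ε)
                        inferInstance) P
                      (trueGrad t (fun _ => α0) (fun _ => Ws0) τ (fun _ => η0) muv) ω j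
                    - plugGrad t (fun _ => α0) (fun _ => Ws0) Ss τ ε (fun _ => η0) muv ω j)
                  * v (Yall t (fun _ => α0) (fun _ => Ws0) Ss τ ε ω) j| ∂P} :=
  prop_plug_in_objective_general p hp kl ku hkl

end PolicyEB
end
end

section
/- (Crude bound on the empirical Bayes versus oracle posterior mean gap.) Let F̂ be a probability distribution on R² supported in {τ : ‖τ‖₂ ≤ M̄_J} where M̄_J = max_j max(‖Ẑ_j‖₂, 1). Suppose Assumptions 1, 3 hold, c̲ I₂ ⪯ Ω̂_t ⪯ c̄ I₂ for all t, and ‖χ̂ − χ₀‖∞ ≤ C₀ for a constant C₀ > 0. Then for every j, ‖θ̂_{j,F̂}* − θ_j*‖₂ ≤ C·Z̄_J, where θ̂_{j,F̂}* = α̂_{t_j} + Ω̂_{t_j}^{1/2} E_{F̂,Ψ̂_j}[τ | Ẑ_j], θ_j* = α_{t_j} + Ω_{t_j}^{1/2} E_{F₀,Ψ_j}[τ | Z_j], Z̄_J = max(max_{j≤J} ‖Z_j‖₂, 1), and C is a constant depending only on the hyperparameters and C₀. -/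
/-!
A posterior mean `E_{F,Ψ}[τ | z]` is an average of points of the support of `F` with positive
weights, so it lies in any ball centred at `0` that carries `F`, whatever `Ψ` and `z` are. The
oracle prior lives in the rectangle of Assumption 1, the estimated prior in the ball of radius
`M̄_J`, and `M̄_J ≲ Z̄_J` because `Ω̂^{1/2}` is bounded below and `α̂` is within `C₀` of `α`.
Mapping back by `Ω̂^{1/2}` and `Ω^{1/2}`, whose operator norms are at most `√c̄`, and adding
`‖α̂ - α‖` gives a bound linear in `Z̄_J ≥ 1`.
-/

open MeasureTheory ProbabilityTheory Matrix Real Filter Set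
open scoped ENNReal NNReal Classical

noncomputable section

namespace PolicyEB

attribute [local instance] Matrix.normedAddCommGroup Matrix.normedSpace

variable {J T : ℕ} {Ωs : Type}

lemma n2_eq_norm (v : V) : n2 v = ‖(EuclideanSpace.equiv (Fin 2) ℝ).symm v‖ := by
  rw [EuclideanSpace.norm_eq, n2, Fin.sum_univ_two]
  simp [Real.norm_eq_abs, sq_abs]

lemma n2_nonneg (v : V) : 0 ≤ n2 v := Real.sqrt_nonneg _

lemma n2_add_le (u v : V) : n2 (u + v) ≤ n2 u + n2 v := by
  simpa only [n2_eq_norm, map_add] using norm_add_le _ _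

lemma n2_sub_le (u v : V) : n2 (u - v) ≤ n2 u + n2 v := by
  simpa only [n2_eq_norm, map_sub] using norm_sub_le _ _

lemma n2_smul (c : ℝ) (v : V) : n2 (c • v) = |c| * n2 v := by
  rw [n2_eq_norm, n2_eq_norm, map_smul, norm_smul, Real.norm_eq_abs]

lemma n2_sq (v : V) : n2 v ^ 2 = v ⬝ᵥ v := by
  rw [n2, Real.sq_sqrt (by positivity)]
  simp [dotProduct, Fin.sum_univ_two, sq]

lemma n2_le_abs_add_abs (v : V) : n2 v ≤ |v 0| + |v 1| := by
  refine Real.sqrt_le_iff.2 ⟨by positivity, ?_⟩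
  nlinarith [sq_abs (v 0), sq_abs (v 1), abs_nonneg (v 0), abs_nonneg (v 1)]

lemma n2_le_two_mul_ninf (v : V) : n2 v ≤ 2 * ninf v :=
  (n2_le_abs_add_abs v).trans <| by
    rw [ninf]; linarith [le_max_left |v 0| |v 1|, le_max_right |v 0| |v 1|]

section Loewner

lemma mul_n2_sq_le_of_loewnerLE {B : M2} {c : ℝ} (h : LoewnerLE (c • (1 : M2)) B) (x : V) :
    c * n2 x ^ 2 ≤ x ⬝ᵥ B *ᵥ x := by
  have := h.dotProduct_mulVec_nonneg x
  simp only [star_trivial, sub_mulVec, dotProduct_sub, smul_mulVec, one_mulVec,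
    dotProduct_smul, smul_eq_mul] at this
  rw [n2_sq]
  linarith

lemma le_mul_n2_sq_of_loewnerLE {B : M2} {c : ℝ} (h : LoewnerLE B (c • (1 : M2))) (x : V) :
    x ⬝ᵥ B *ᵥ x ≤ c * n2 x ^ 2 := by
  have := h.dotProduct_mulVec_nonneg x
  simp only [star_trivial, sub_mulVec, dotProduct_sub, smul_mulVec, one_mulVec,
    dotProduct_smul, smul_eq_mul] at this
  rw [n2_sq]
  linarith

lemma dotProduct_mul_self_mulVec_eq_n2_sq {A : M2} (hA : Aᵀ = A) (x : V) :
    x ⬝ᵥ (A * A) *ᵥ x = n2 (A *ᵥ x) ^ 2 := by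
  have hvec : x ᵥ* A = A *ᵥ x := by rw [← vecMul_transpose, hA]
  rw [n2_sq, ← mulVec_mulVec, dotProduct_mulVec, hvec]

variable {A : M2} {c : ℝ}

lemma n2_mulVec_le_of_loewnerLE (hA : Aᵀ = A) (h : LoewnerLE (A * A) (c • (1 : M2))) (x : V) :
    n2 (A *ᵥ x) ≤ √c * n2 x := by
  have hsq := le_mul_n2_sq_of_loewnerLE h x
  rw [dotProduct_mul_self_mulVec_eq_n2_sq hA] at hsq
  calc n2 (A *ᵥ x) = √(n2 (A *ᵥ x) ^ 2) := (Real.sqrt_sq (n2_nonneg _)).symm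
    _ ≤ √(c * n2 x ^ 2) := Real.sqrt_le_sqrt hsq
    _ = √c * n2 x := by rw [Real.sqrt_mul' _ (sq_nonneg _), Real.sqrt_sq (n2_nonneg _)]

lemma mul_n2_le_of_loewnerLE (hA : Aᵀ = A) (h : LoewnerLE (c • (1 : M2)) (A * A)) (x : V) :
    √c * n2 x ≤ n2 (A *ᵥ x) := by
  have hsq := mul_n2_sq_le_of_loewnerLE h x
  rw [dotProduct_mul_self_mulVec_eq_n2_sq hA] at hsq
  calc √c * n2 x = √(c * n2 x ^ 2) := by
        rw [Real.sqrt_mul' _ (sq_nonneg _), Real.sqrt_sq (n2_nonneg _)]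
    _ ≤ √(n2 (A *ᵥ x) ^ 2) := Real.sqrt_le_sqrt hsq
    _ = n2 (A *ᵥ x) := Real.sqrt_sq (n2_nonneg _)

lemma isUnit_det_of_loewnerLE (hc : 0 < c)
    (h : LoewnerLE (c • (1 : M2)) (A * A)) : IsUnit A.det := by
  have hpos : (A * A).PosDef := by
    simpa using PosDef.posSemidef_add h (PosDef.one.smul hc)
  have hdet := hpos.det_pos
  rw [det_mul] at hdet
  exact Ne.isUnit fun h0 => by simp [h0] at hdet

lemma n2_inv_mulVec_le_of_loewnerLE (hc : 0 < c) (hA : Aᵀ = A)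
    (h : LoewnerLE (c • (1 : M2)) (A * A)) (y : V) :
    n2 (A⁻¹ *ᵥ y) ≤ (√c)⁻¹ * n2 y := by
  have hy : A *ᵥ (A⁻¹ *ᵥ y) = y := by
    rw [mulVec_mulVec, mul_nonsing_inv A (isUnit_det_of_loewnerLE hc h), one_mulVec]
  rw [inv_mul_eq_div, le_div_iff₀' (Real.sqrt_pos.2 hc)]
  simpa only [hy] using mul_n2_le_of_loewnerLE hA h (A⁻¹ *ᵥ y)

end Loewner

lemma norm_integral_smul_le_mul_integral {α E : Type*} [MeasurableSpace α]
    [NormedAddCommGroup E] [NormedSpace ℝ E] {μ : Measure α} {g : α → ℝ} {f : α → E} {R : ℝ}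
    (hg0 : ∀ x, 0 ≤ g x) (hg : Integrable g μ) (hf : ∀ᵐ x ∂μ, ‖f x‖ ≤ R) :
    ‖∫ x, g x • f x ∂μ‖ ≤ R * ∫ x, g x ∂μ := by
  rw [← integral_const_mul]
  refine norm_integral_le_of_norm_le (hg.const_mul R) ?_
  filter_upwards [hf] with x hx
  rw [norm_smul, Real.norm_of_nonneg (hg0 x), mul_comm R]
  exact mul_le_mul_of_nonneg_left hx (hg0 x)

lemma n2_postMean_le {F : Measure V} {R : ℝ} (hR : 0 ≤ R) (hF : ∀ᵐ τ ∂F, n2 τ ≤ R)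
    (Ψ : M2) (z : V) : n2 (postMean F Ψ z) ≤ R := by
  have hd : 0 ≤ ∫ τ, gk Ψ (z - τ) ∂F := integral_nonneg fun τ => (Real.exp_pos _).le
  rcases hd.eq_or_lt with hd0 | hdpos
  -- a vanishing normalising integral makes `postMean` the junk value `0`
  · rw [postMean, ← hd0, _root_.inv_zero, zero_smul]
    simpa [n2] using hR
  have hnum : n2 (∫ τ, gk Ψ (z - τ) • τ ∂F) ≤ R * ∫ τ, gk Ψ (z - τ) ∂F := by
    rw [n2_eq_norm, ← ContinuousLinearEquiv.integral_comp_comm]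
    simp only [map_smul]
    refine norm_integral_smul_le_mul_integral (fun τ => (Real.exp_pos _).le)
      (Integrable.of_integral_ne_zero hdpos.ne') ?_
    simpa only [n2_eq_norm] using hF
  rw [postMean, n2_smul, abs_inv, abs_of_pos hdpos, inv_mul_le_iff₀ hdpos]
  linarith

lemma n2_le_of_mem_rectangle {swl swh sgl sgh : ℝ} {v : V}
    (hv : v 0 ∈ Icc swl swh ∧ v 1 ∈ Icc sgl sgh) :
    n2 v ≤ max |swl| |swh| + max |sgl| |sgh| :=
  (n2_le_abs_add_abs v).trans <|
    add_le_add (abs_le_max_abs_abs hv.1.1 hv.1.2) (abs_le_max_abs_abs hv.2.1 hv.2.2)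

section Model

variable {J T : ℕ} {Ωs : Type} (t : Fin J → Fin T) (α : Fin T → V) (Ws : Fin T → M2)
  (Ss : Fin J → M2) (τ ε : Fin J → Ωs → V) (ahat : Fin T → Ωs → V) (Whts : Fin T → Ωs → M2)
  (j : Fin J) (ω : Ωs)

lemma one_le_zbar : 1 ≤ Zbar t α Ws Ss τ ε ω := le_max_right _ _

lemma n2_zres_le_zbar : n2 (Zres t α Ws Ss τ ε j ω) ≤ Zbar t α Ws Ss τ ε ω :=
  (le_ciSup (f := fun j => n2 (Zres t α Ws Ss τ ε j ω)) (Set.finite_range _).bddAbove j).trans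
    (le_max_left _ _)

lemma ninf_sub_le_chiDist (u : Fin T) : ninf (ahat u ω - α u) ≤ chiDist α Ws ahat Whts ω :=
  (le_max_left _ _).trans <| le_ciSup
    (f := fun u => max (ninf (ahat u ω - α u)) (opN (Whts u ω - Ws u)))
    (Set.finite_range _).bddAbove u

lemma obsY_sub_eq_mulVec_zres (hW : IsUnit (Ws (t j)).det) :
    obsY t α Ws Ss τ ε j ω - α (t j) = Ws (t j) *ᵥ Zres t α Ws Ss τ ε j ω := by
  rw [Zres, mulVec_mulVec, mul_nonsing_inv _ hW, one_mulVec]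

lemma n2_zhat_le {cl cu : ℝ} (hcl : 0 < cl)
    (hW : (Ws (t j))ᵀ = Ws (t j)) (hWlo : LoewnerLE (cl • (1 : M2)) (Ws (t j) * Ws (t j)))
    (hWup : LoewnerLE (Ws (t j) * Ws (t j)) (cu • (1 : M2)))
    (hWh : (Whts (t j) ω)ᵀ = Whts (t j) ω)
    (hWhlo : LoewnerLE (cl • (1 : M2)) (Whts (t j) ω * Whts (t j) ω)) :
    n2 (Zhat t α Ws Ss τ ε ahat Whts j ω) ≤
      (√cl)⁻¹ * (√cu * n2 (Zres t α Ws Ss τ ε j ω) + 2 * ninf (ahat (t j) ω - α (t j))) := by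
  have hsplit : obsY t α Ws Ss τ ε j ω - ahat (t j) ω =
      Ws (t j) *ᵥ Zres t α Ws Ss τ ε j ω - (ahat (t j) ω - α (t j)) := by
    rw [← obsY_sub_eq_mulVec_zres t α Ws Ss τ ε j ω (isUnit_det_of_loewnerLE hcl hWlo)]
    abel
  refine (n2_inv_mulVec_le_of_loewnerLE hcl hWh hWhlo _).trans ?_
  rw [hsplit]
  gcongr
  exact (n2_sub_le _ _).trans <| add_le_add (n2_mulVec_le_of_loewnerLE hW hWup _)
    (n2_le_two_mul_ninf _)

lemma n2_zhat_le_mul_zbar {cl cu C0 : ℝ} (hcl : 0 < cl) (hC0 : 0 ≤ C0)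
    (hW : (Ws (t j))ᵀ = Ws (t j)) (hWlo : LoewnerLE (cl • (1 : M2)) (Ws (t j) * Ws (t j)))
    (hWup : LoewnerLE (Ws (t j) * Ws (t j)) (cu • (1 : M2)))
    (hWh : (Whts (t j) ω)ᵀ = Whts (t j) ω)
    (hWhlo : LoewnerLE (cl • (1 : M2)) (Whts (t j) ω * Whts (t j) ω))
    (ha : ninf (ahat (t j) ω - α (t j)) ≤ C0) :
    n2 (Zhat t α Ws Ss τ ε ahat Whts j ω) ≤ (√cu + 2 * C0) / √cl * Zbar t α Ws Ss τ ε ω := by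
  have hZb := one_le_zbar t α Ws Ss τ ε ω
  calc _ ≤ (√cl)⁻¹ * (√cu * Zbar t α Ws Ss τ ε ω + 2 * C0) :=
        (n2_zhat_le t α Ws Ss τ ε ahat Whts j ω hcl hW hWlo hWup hWh hWhlo).trans
          (by gcongr; exact n2_zres_le_zbar t α Ws Ss τ ε j ω)
    _ ≤ (√cl)⁻¹ * ((√cu + 2 * C0) * Zbar t α Ws Ss τ ε ω) := by gcongr; nlinarith
    _ = _ := by ring

lemma thetaHatStar_sub_thetaStar (Fh F0 : Measure V) :
    thetaHatStar (fun _ => Fh) t α Ws Ss τ ε ahat Whts j ω - thetaStar F0 t α Ws Ss τ ε j ω =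
      (ahat (t j) ω - α (t j))
        + Whts (t j) ω *ᵥ postMean Fh (PsiHat t Ss Whts j ω) (Zhat t α Ws Ss τ ε ahat Whts j ω)
        - Ws (t j) *ᵥ postMean F0 (PsiM t Ws Ss j) (Zres t α Ws Ss τ ε j ω) := by
  rw [thetaHatStar, thetaStar]
  abel

lemma n2_thetaHatStar_sub_thetaStar_le {cu : ℝ} (Fh F0 : Measure V)
    (hW : (Ws (t j))ᵀ = Ws (t j)) (hWup : LoewnerLE (Ws (t j) * Ws (t j)) (cu • (1 : M2)))
    (hWh : (Whts (t j) ω)ᵀ = Whts (t j) ω)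
    (hWhup : LoewnerLE (Whts (t j) ω * Whts (t j) ω) (cu • (1 : M2))) :
    n2 (thetaHatStar (fun _ => Fh) t α Ws Ss τ ε ahat Whts j ω - thetaStar F0 t α Ws Ss τ ε j ω)
      ≤ 2 * ninf (ahat (t j) ω - α (t j))
        + √cu * n2 (postMean Fh (PsiHat t Ss Whts j ω) (Zhat t α Ws Ss τ ε ahat Whts j ω))
        + √cu * n2 (postMean F0 (PsiM t Ws Ss j) (Zres t α Ws Ss τ ε j ω)) := by
  rw [thetaHatStar_sub_thetaStar]
  exact (n2_sub_le _ _).trans <| add_le_add ((n2_add_le _ _).trans <|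
    add_le_add (n2_le_two_mul_ninf _) (n2_mulVec_le_of_loewnerLE hWh hWhup _))
    (n2_mulVec_le_of_loewnerLE hW hWup _)

end Model

theorem lem_crude_gap_general
    (swl swh sgl sgh cl cu C0 : ℝ) (hcl : 0 < cl) (hC0 : 0 < C0) :
    ∃ C : ℝ, 0 < C ∧
      ∀ (J T : ℕ), 1 ≤ J → 1 ≤ T →
      ∀ (Ωs : Type) (_ : MeasurableSpace Ωs) (P : Measure Ωs)
        (t : Fin J → Fin T) (F0 : Measure V) (τ ε : Fin J → Ωs → V)
        (α : Fin T → V) (Ws : Fin T → M2) (Ss : Fin J → M2)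
        (ahat : Fin T → Ωs → V) (Whts : Fin T → Ωs → M2),
        Model P t F0 τ ε α Ws Ss swl swh sgl sgh →
        Assump3 Ws cl cu →
        ∀ (ω : Ωs) (Fh : Measure V), IsProbabilityMeasure Fh →
          Fh {x : V | n2 x ≤ ⨆ j, max (n2 (Zhat t α Ws Ss τ ε ahat Whts j ω)) 1}ᶜ = 0 →
          (∀ u, (Whts u ω).PosSemidef) →
          (∀ u, LoewnerLE (cl • (1 : M2)) (Whts u ω * Whts u ω)) →
          (∀ u, LoewnerLE (Whts u ω * Whts u ω) (cu • (1 : M2))) →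
          chiDist α Ws ahat Whts ω ≤ C0 →
          ∀ j, n2 (thetaHatStar (fun _ => Fh) t α Ws Ss τ ε ahat Whts j ω
                - thetaStar F0 t α Ws Ss τ ε j ω)
            ≤ C * Zbar t α Ws Ss τ ε ω := by
  set B := max |swl| |swh| + max |sgl| |sgh|
  set K := 1 + (√cu + 2 * C0) / √cl
  refine ⟨2 * C0 + √cu * K + √cu * B, by positivity, ?_⟩
  intro J T _ _ Ωs _ P t F0 τ ε α Ws Ss ahat Whts hM hA3 ω Fh _ hFh hWh hWhlo hWhup hchi j
  set Zb := Zbar t α Ws Ss τ ε ω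
  have hZb : 1 ≤ Zb := one_le_zbar ..
  have hK : 1 ≤ K := le_add_of_nonneg_right (by positivity)
  have hKZb : 0 ≤ K * Zb := by nlinarith
  have ha : ∀ u, ninf (ahat u ω - α u) ≤ C0 := fun u =>
    (ninf_sub_le_chiDist α Ws ahat Whts ω u).trans hchi
  have hMbar : ⨆ i, max (n2 (Zhat t α Ws Ss τ ε ahat Whts i ω)) 1 ≤ K * Zb :=
    Real.iSup_le (fun i => max_le ((n2_zhat_le_mul_zbar t α Ws Ss τ ε ahat Whts i ω hcl hC0.le
      (hM.Ws_psd _).1 (hA3.lower _) (hA3.upper _) (hWh _).1 (hWhlo _) (ha _)).trans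
        (by gcongr; linarith)) (by nlinarith)) hKZb
  have hmHat := n2_postMean_le hKZb (Filter.Eventually.mono (mem_ae_iff.2 hFh) fun _ hx =>
    hx.trans hMbar) (PsiHat t Ss Whts j ω) (Zhat t α Ws Ss τ ε ahat Whts j ω)
  have hm := n2_postMean_le (by positivity : 0 ≤ B)
    (hM.suppF.mono fun _ hv => n2_le_of_mem_rectangle hv) (PsiM t Ws Ss j)
    (Zres t α Ws Ss τ ε j ω)
  refine (n2_thetaHatStar_sub_thetaStar_le t α Ws Ss τ ε ahat Whts j ω Fh F0 (hM.Ws_psd _).1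
    (hA3.upper _) (hWh _).1 (hWhup _)).trans ?_
  nlinarith [ha (t j), mul_le_mul_of_nonneg_left hmHat (Real.sqrt_nonneg cu),
    mul_le_mul_of_nonneg_left hm (Real.sqrt_nonneg cu),
    mul_nonneg (by positivity : 0 ≤ 2 * C0 + √cu * B) (sub_nonneg.2 hZb)]

/-- Lemma OA3.6: crude bound on the empirical Bayes versus oracle posterior
mean gap. -/
theorem lem_crude_gap
    (swl swh sgl sgh cl cu C0 : ℝ) (hcl : 0 < cl) (hcu : cl ≤ cu) (hC0 : 0 < C0) :
    ∃ C : ℝ, 0 < C ∧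
      ∀ (J T : ℕ), 1 ≤ J → 1 ≤ T →
      ∀ (Ωs : Type) (_ : MeasurableSpace Ωs) (P : Measure Ωs)
        (t : Fin J → Fin T) (F0 : Measure V) (τ ε : Fin J → Ωs → V)
        (α : Fin T → V) (Ws : Fin T → M2) (Ss : Fin J → M2)
        (ahat : Fin T → Ωs → V) (Whts : Fin T → Ωs → M2),
        Model P t F0 τ ε α Ws Ss swl swh sgl sgh →
        Assump3 Ws cl cu →
        ∀ (ω : Ωs) (Fh : Measure V), IsProbabilityMeasure Fh →
          Fh {x : V | n2 x ≤ ⨆ j, max (n2 (Zhat t α Ws Ss τ ε ahat Whts j ω)) 1}ᶜ = 0 →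
          (∀ u, (Whts u ω).PosSemidef) →
          (∀ u, LoewnerLE (cl • (1 : M2)) (Whts u ω * Whts u ω)) →
          (∀ u, LoewnerLE (Whts u ω * Whts u ω) (cu • (1 : M2))) →
          chiDist α Ws ahat Whts ω ≤ C0 →
          ∀ j, n2 (thetaHatStar (fun _ => Fh) t α Ws Ss τ ε ahat Whts j ω
                - thetaStar F0 t α Ws Ss τ ε j ω)
            ≤ C * Zbar t α Ws Ss τ ε ω :=
  lem_crude_gap_general swl swh sgl sgh cl cu C0 hcl hC0

end PolicyEB
end
end
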